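/- (Strips Theorem, two-sided tape) Let f be a partial function on natural numbers computed by a two-sided Turing machine with binary input/output where the output may be read off shifted by some fixed offset. If f halts on input i, then there exist natural numbers n, and an integer l, such that for all x, f(x·2^(n+1) + i) = f(i) + 2^l · (x·2^(n+1)). That is, f consists of strips of functions of the form a + 2^l·x with l ∈ ℤ. -/

import Mathlib

/-!
A machine halting after `t` steps, started at the origin, reads only cells `< t`. For `m ≥ t`
beyond the bits of `i` and the output origin `d`, the inputs `x * 2^m + i` agree with `i` on
every cell the machine reads: the computation is identical, and the untouched high cells of the
final tape still carry the bits of `x`, now at output position `m - d`. Hence the output is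
`f(i) + x * 2^(m - d) = f(i) + 2^(-d) * (x * 2^m)`.
-/

/-- A two-sided Turing machine: the transition table maps (state, color) to either
`none` (halt) or a triple (written color, move-right?, next state). -/
structure TM2 (σ : Type) where
  trans : σ → Bool → Option (Bool × Bool × σ)
  init : σ

/-- A configuration of a two-sided machine: state, head position on a tape infinite
in both directions, and tape contents. -/
structure Cfg2 (σ : Type) where
  state : σ
  pos : ℤ
  tape : ℤ → Bool

/-- One step: either a new configuration, or the final tape upon halting. -/
def TM2.stepA {σ : Type} (M : TM2 σ) (c : Cfg2 σ) : Sum (Cfg2 σ) (ℤ → Bool) :=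
  match M.trans c.state (c.tape c.pos) with
  | none => Sum.inr c.tape
  | some r =>
      Sum.inl ⟨r.2.2, if r.2.1 then c.pos + 1 else c.pos - 1,
        Function.update c.tape c.pos r.1⟩

/-- Running the machine for `t` steps. -/
def TM2.run {σ : Type} (M : TM2 σ) (c : Cfg2 σ) : ℕ → Sum (Cfg2 σ) (ℤ → Bool)
  | 0 => Sum.inl c
  | t + 1 =>
    match M.run c t with
    | Sum.inl c' => M.stepA c'
    | Sum.inr tp => Sum.inr tp

/-- Initial configuration on binary input `i`, written around the origin. -/
def initCfg2 {σ : Type} (M : TM2 σ) (i : ℕ) : Cfg2 σ :=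
  ⟨M.init, 0, fun z => if 0 ≤ z then i.testBit z.toNat else false⟩

/-- `M` halts on binary input `i` with binary output `r`, where the output is read
off from the final tape relative to some (shifted) origin `d`. -/
def ComputesOn2 {σ : Type} (M : TM2 σ) (i r : ℕ) : Prop :=
  ∃ (t : ℕ) (tp : ℤ → Bool) (d : ℤ), M.run (initCfg2 M i) t = Sum.inr tp ∧
    ∀ j : ℕ, tp (d + (j : ℤ)) = r.testBit j

lemma Nat.testBit_mul_two_pow_add (x : ℕ) {i m : ℕ} (hi : i < 2 ^ m) (j : ℕ) :
    (x * 2 ^ m + i).testBit j = if j < m then i.testBit j else x.testBit (j - m) := by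
  rw [mul_comm, Nat.testBit_two_pow_mul_add x hi]

def Cfg2.AgreeOn {σ : Type} (S : Set ℤ) (c₁ c₂ : Cfg2 σ) : Prop :=
  c₁.state = c₂.state ∧ c₁.pos = c₂.pos ∧ Set.EqOn c₁.tape c₂.tape S

namespace TM2

variable {σ : Type} (M : TM2 σ)

def tapeOf : Cfg2 σ ⊕ (ℤ → Bool) → ℤ → Bool := Sum.elim Cfg2.tape id

lemma run_succ (c : Cfg2 σ) (s : ℕ) :
    M.run c (s + 1) = (M.run c s).elim M.stepA Sum.inr := by
  rw [run]
  cases M.run c s <;> rfl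

lemma pos_le_of_stepA_eq_inl {c c' : Cfg2 σ} (h : M.stepA c = Sum.inl c') :
    c'.pos ≤ c.pos + 1 := by
  unfold stepA at h
  split at h
  · cases h
  · cases h
    dsimp only
    split <;> omega

lemma tapeOf_stepA_of_ne {c : Cfg2 σ} {z : ℤ} (hz : z ≠ c.pos) :
    tapeOf (M.stepA c) z = c.tape z := by
  unfold stepA
  split <;> simp [tapeOf, Function.update_of_ne hz]

lemma pos_le_of_run_eq_inl {c c' : Cfg2 σ} {s : ℕ} (h : M.run c s = Sum.inl c') :
    c'.pos ≤ c.pos + s := by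
  induction s generalizing c' with
  | zero => cases h; simp
  | succ s ih =>
    rw [run_succ] at h
    rcases hs : M.run c s with c'' | tp <;> rw [hs] at h
    · have hprev := ih hs
      have hstep := M.pos_le_of_stepA_eq_inl h
      push_cast
      omega
    · cases h

lemma tapeOf_run_of_le (c : Cfg2 σ) {s : ℕ} {z : ℤ} (hz : c.pos + s ≤ z) :
    tapeOf (M.run c s) z = c.tape z := by
  induction s with
  | zero => rfl
  | succ s ih =>
    rw [run_succ]
    rcases hs : M.run c s with c'' | tp
    · have hpos := M.pos_le_of_run_eq_inl hs
      rw [Sum.elim_inl, M.tapeOf_stepA_of_ne (by push_cast at hz; omega)]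
      simpa [hs, tapeOf] using ih (by push_cast at hz; omega)
    · simpa [hs] using ih (by push_cast at hz; omega)

lemma stepA_liftRel {S : Set ℤ} {c₁ c₂ : Cfg2 σ} (h : c₁.AgreeOn S c₂) (hpos : c₁.pos ∈ S) :
    Sum.LiftRel (Cfg2.AgreeOn S) (fun tp₁ tp₂ => Set.EqOn tp₁ tp₂ S)
      (M.stepA c₁) (M.stepA c₂) := by
  obtain ⟨hstate, hpos_eq, htape⟩ := h
  have hread : c₁.tape c₁.pos = c₂.tape c₂.pos := hpos_eq ▸ htape hpos
  unfold stepA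
  rw [hstate, hread]
  cases M.trans c₂.state (c₂.tape c₂.pos) with
  | none => exact Sum.LiftRel.inr htape
  | some r =>
    refine Sum.LiftRel.inl ⟨rfl, by simp [hpos_eq], fun z hz => ?_⟩
    by_cases hz' : z = c₁.pos
    · simp [hz', hpos_eq]
    · simp [Function.update_of_ne hz', Function.update_of_ne (hpos_eq ▸ hz'), htape hz]

lemma run_liftRel {n : ℤ} {c₁ c₂ : Cfg2 σ} (h : c₁.AgreeOn (Set.Iio n) c₂) {s : ℕ}
    (hs : c₁.pos + s ≤ n) :
    Sum.LiftRel (Cfg2.AgreeOn (Set.Iio n)) (fun tp₁ tp₂ => Set.EqOn tp₁ tp₂ (Set.Iio n))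
      (M.run c₁ s) (M.run c₂ s) := by
  induction s with
  | zero => exact Sum.LiftRel.inl h
  | succ s ih =>
    have hrel := ih (by push_cast at hs; omega)
    rw [run_succ, run_succ]
    rcases hrun₁ : M.run c₁ s with c₁' | tp₁ <;> rcases hrun₂ : M.run c₂ s with c₂' | tp₂ <;>
      simp only [hrun₁, hrun₂, Sum.liftRel_inl_inl, Sum.liftRel_inr_inr, Sum.not_liftRel_inl_inr,
        Sum.not_liftRel_inr_inl] at hrel ⊢
    · have hpos := M.pos_le_of_run_eq_inl hrun₁
      exact M.stepA_liftRel hrel (by push_cast at hs; simp only [Set.mem_Iio]; omega)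
    · exact Sum.LiftRel.inr hrel

lemma _root_.initCfg2_tape_natCast (i j : ℕ) :
    (initCfg2 M i).tape j = i.testBit j := by
  simp [initCfg2]

lemma _root_.initCfg2_agreeOn (x : ℕ) {i m : ℕ} (hi : i < 2 ^ m) :
    (initCfg2 M i).AgreeOn (Set.Iio m) (initCfg2 M (x * 2 ^ m + i)) := by
  refine ⟨rfl, rfl, fun z hz => ?_⟩
  simp only [initCfg2]
  split_ifs
  · rw [Nat.testBit_mul_two_pow_add x hi, if_pos (by simp only [Set.mem_Iio] at hz; omega)]
  · rfl

lemma run_initCfg2_mul_two_pow_add {i m t : ℕ} (hi : i < 2 ^ m)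
    (ht : t ≤ m) {tp : ℤ → Bool} (hrun : M.run (initCfg2 M i) t = Sum.inr tp) (x : ℕ) :
    ∃ tp', M.run (initCfg2 M (x * 2 ^ m + i)) t = Sum.inr tp' ∧
      Set.EqOn tp tp' (Set.Iio m) ∧ ∀ j : ℕ, tp (m + j) = false ∧ tp' (m + j) = x.testBit j := by
  have hrel := M.run_liftRel (initCfg2_agreeOn M x hi) (s := t) (by simp [initCfg2, ht])
  rw [hrun] at hrel
  obtain ⟨_, tp', hagree, ⟨⟩, hrun'⟩ := hrel.exists_of_isRight_left rfl
  refine ⟨tp', hrun', hagree, fun j => ?_⟩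
  have hframe (k : ℕ) : tapeOf (M.run (initCfg2 M k) t) (m + j) = k.testBit (m + j) := by
    rw [M.tapeOf_run_of_le _ (by simp [initCfg2]; omega), ← Nat.cast_add, initCfg2_tape_natCast]
  have hold := hframe i
  have hnew := hframe (x * 2 ^ m + i)
  rw [hrun, tapeOf, Sum.elim_inr, id] at hold
  rw [hrun', tapeOf, Sum.elim_inr, id] at hnew
  rw [hold, hnew, Nat.testBit_lt_two_pow (hi.trans_le (Nat.pow_le_pow_right two_pos (by omega))),
    Nat.testBit_mul_two_pow_add x hi, if_neg (by omega), Nat.add_sub_cancel_left]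
  exact ⟨rfl, rfl⟩

end TM2

/-- The old output `r` ends before cell `m`, where the blank tail of the old tape sits, so read
from the same origin `d` the new tape shows `r` followed, from bit `k = m - d` on, by `x`. -/
lemma tape_add_eq_testBit_mul_two_pow_add {tp tp' : ℤ → Bool} {d : ℤ} {m k : ℕ}
    (hk : (k : ℤ) = m - d) {r x : ℕ} (hr : ∀ j : ℕ, tp (d + j) = r.testBit j)
    (hlow : Set.EqOn tp tp' (Set.Iio m))
    (hhigh : ∀ j : ℕ, tp (m + j) = false ∧ tp' (m + j) = x.testBit j) (j : ℕ) :
    tp' (d + j) = (x * 2 ^ k + r).testBit j := by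
  have hshift : ∀ j : ℕ, k ≤ j → d + j = m + (j - k : ℕ) := fun j hj => by push_cast [hj]; omega
  have hr_lt : r < 2 ^ k :=
    Nat.lt_pow_two_of_testBit r fun j hj => by rw [← hr, hshift j hj, (hhigh _).1]
  rw [Nat.testBit_mul_two_pow_add x hr_lt]
  split_ifs with hj
  · rw [← hr, hlow (by simp only [Set.mem_Iio]; omega)]
  · rw [hshift j (by omega), (hhigh _).2]

/-- (Strips Theorem, two-sided tape.) If a two-sided Turing machine with binary
input/output (output possibly read at a shifted origin) halts on input `i` with
value `r = f(i)`, then there are `n : ℕ` and `l : ℤ` such that for all `x`, the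
machine halts on input `x·2^(n+1) + i` with a value `rx` satisfying
`rx = f(i) + 2^l · (x·2^(n+1))`; i.e. `f` consists of strips of functions of the
form `a + 2^l·x` with `l ∈ ℤ`. -/
theorem strips_theorem_two_sided {σ : Type} (M : TM2 σ) (i r : ℕ)
    (hhalt : ComputesOn2 M i r) :
    ∃ (n : ℕ) (l : ℤ), ∀ x : ℕ, ∃ rx : ℕ, ComputesOn2 M (x * 2 ^ (n + 1) + i) rx ∧
      (rx : ℚ) = (r : ℚ) + (2 : ℚ) ^ l * ((x : ℚ) * 2 ^ (n + 1)) := by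
  obtain ⟨t, tp, d, hrun, hr⟩ := hhalt
  set n := t + i + d.toNat
  obtain ⟨k, hk⟩ : ∃ k : ℕ, (k : ℤ) = (n + 1 : ℕ) - d := ⟨((n + 1 : ℕ) - d).toNat, by omega⟩
  have hi : i < 2 ^ (n + 1) := i.lt_two_pow_self.trans_le (Nat.pow_le_pow_right two_pos (by omega))
  refine ⟨n, -d, fun x => ?_⟩
  obtain ⟨tp', hrun', hlow, hhigh⟩ := M.run_initCfg2_mul_two_pow_add hi (by omega) hrun x
  refine ⟨x * 2 ^ k + r, ⟨t, tp', d, hrun', tape_add_eq_testBit_mul_two_pow_add hk hr hlow hhigh⟩, ?_⟩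
  have h2k : (2 : ℚ) ^ k = 2 ^ (-d) * 2 ^ (n + 1) := by
    rw [← zpow_natCast, ← zpow_natCast, ← zpow_add₀ two_ne_zero, hk]
    ring_nf
  push_cast
  rw [h2k]
  ring
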